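/- If M and N are Markov monoids, then their free product M ∗ N (the coproduct of M and N in the category of monoids) is a Markov monoid. -/

import Mathlib

open Function

/-- A language is regular if it is accepted by a deterministic finite automaton
with a finite state set. -/
def RegularLang {A : Type} (L : Language A) : Prop :=
  ∃ (Q : Type) (_ : Fintype Q) (M : DFA A Q), M.accepts = L

/-- The product of a nonempty word under the letter-assignment `φ`; the empty
word is sent to `none`. This is the induced map `φ⁺` on nonempty words. -/
def prodPlus {A S : Type} [Semigroup S] (φ : A → S) : List A → Option S
  | [] => none
  | a :: w => some (w.foldl (fun s b => s * φ b) (φ a))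

/-- The induced monoid homomorphism `φ*` from the free monoid of words. -/
def monProd {A M : Type} [Monoid M] (φ : A → M) (w : List A) : M :=
  (w.map φ).prod

/-- A semigroup Markov language for `S` over `A` (with respect to `φ`): a regular,
`+`-prefix-closed language of nonempty words mapping bijectively onto `S` under `φ⁺`. -/
structure IsSgMarkovLang {A S : Type} [Semigroup S] (φ : A → S) (L : Language A) : Prop where
  regular : RegularLang L
  not_empty_mem : [] ∉ L
  plus_prefix_closed : ∀ u v : List A, u ≠ [] → v ≠ [] → u ++ v ∈ L → u ∈ L
  unique_rep : ∀ s : S, ∃! w : List A, w ∈ L ∧ prodPlus φ w = some s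

/-- A robust semigroup Markov language: additionally every word of `L` has minimal
length among (nonempty) words representing the same element. -/
structure IsRobustSgMarkovLang {A S : Type} [Semigroup S] (φ : A → S) (L : Language A)
    extends IsSgMarkovLang φ L : Prop where
  min_length : ∀ w ∈ L, ∀ v : List A, prodPlus φ v = prodPlus φ w → w.length ≤ v.length

/-- A monoid Markov language for `M` over `A` (with respect to `φ`): a regular,
prefix-closed language mapping bijectively onto `M` under `φ*`. -/
structure IsMonMarkovLang {A M : Type} [Monoid M] (φ : A → M) (L : Language A) : Prop where
  regular : RegularLang L
  prefix_closed : ∀ u v : List A, u ++ v ∈ L → u ∈ L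
  unique_rep : ∀ m : M, ∃! w : List A, w ∈ L ∧ monProd φ w = m

/-- A robust monoid Markov language: additionally every word of `L` has minimal
length among words representing the same element. -/
structure IsRobustMonMarkovLang {A M : Type} [Monoid M] (φ : A → M) (L : Language A)
    extends IsMonMarkovLang φ L : Prop where
  min_length : ∀ w ∈ L, ∀ v : List A, monProd φ v = monProd φ w → w.length ≤ v.length

/-- `S` is Markov as a semigroup. -/
def SgMarkov (S : Type) [Semigroup S] : Prop :=
  ∃ (A : Type) (_ : Fintype A) (φ : A → S),
    (∀ s : S, ∃ w : List A, prodPlus φ w = some s) ∧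
    ∃ L : Language A, IsSgMarkovLang φ L

/-- `S` is robustly Markov (as a semigroup) with respect to some alphabet. -/
def SgRobustlyMarkov (S : Type) [Semigroup S] : Prop :=
  ∃ (A : Type) (_ : Fintype A) (φ : A → S),
    (∀ s : S, ∃ w : List A, prodPlus φ w = some s) ∧
    ∃ L : Language A, IsRobustSgMarkovLang φ L

/-- `S` is strongly Markov (as a semigroup). -/
def SgStronglyMarkov (S : Type) [Semigroup S] : Prop :=
  ∀ (A : Type) [Fintype A] (φ : A → S),
    (∀ s : S, ∃ w : List A, prodPlus φ w = some s) →
    ∃ L : Language A, IsRobustSgMarkovLang φ L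

/-- `M` is Markov as a monoid. -/
def MonMarkov (M : Type) [Monoid M] : Prop :=
  ∃ (A : Type) (_ : Fintype A) (φ : A → M),
    Surjective (monProd φ) ∧ ∃ L : Language A, IsMonMarkovLang φ L

/-- `M` is robustly Markov (as a monoid) with respect to some alphabet. -/
def MonRobustlyMarkov (M : Type) [Monoid M] : Prop :=
  ∃ (A : Type) (_ : Fintype A) (φ : A → M),
    Surjective (monProd φ) ∧ ∃ L : Language A, IsRobustMonMarkovLang φ L

/-- `M` is strongly Markov (as a monoid). -/
def MonStronglyMarkov (M : Type) [Monoid M] : Prop :=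
  ∀ (A : Type) [Fintype A] (φ : A → M),
    Surjective (monProd φ) →
    ∃ L : Language A, IsRobustMonMarkovLang φ L


/-!
Given Markov languages `L i` for the factors, take the words over the disjoint union of the
alphabets whose maximal single-factor blocks are nonempty words of the respective `L i`. They spell
the reduced words of the free product letter by letter, so they form a prefix-closed cross-section.
Regularity follows from Myhill–Nerode: a left quotient is empty, the whole language, or determined
by the factor of the last block together with a left quotient of that factor's language.
-/

open Monoid

section MonProd

variable {A M : Type} [Monoid M]

@[simp]
theorem monProd_append (φ : A → M) (u v : List A) :
    monProd φ (u ++ v) = monProd φ u * monProd φ v := by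
  simp [monProd]

theorem monProd_comp {N : Type} [Monoid N] (f : M →* N) (φ : A → M) (w : List A) :
    monProd (f ∘ φ) w = f (monProd φ w) := by
  simp [monProd, map_list_prod]

end MonProd

namespace IsMonMarkovLang

variable {A M : Type} [Monoid M] {φ : A → M} {L : Language A}

theorem surjective (hL : IsMonMarkovLang φ L) : Surjective (monProd φ) := fun m =>
  let ⟨w, ⟨_, hw⟩, _⟩ := hL.unique_rep m
  ⟨w, hw⟩

theorem nil_mem (hL : IsMonMarkovLang φ L) : [] ∈ L := by
  obtain ⟨w, ⟨hw, -⟩, -⟩ := hL.unique_rep 1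
  exact hL.prefix_closed [] w hw

noncomputable def rep (hL : IsMonMarkovLang φ L) (m : M) : List A :=
  (hL.unique_rep m).exists.choose

theorem rep_mem (hL : IsMonMarkovLang φ L) (m : M) : hL.rep m ∈ L :=
  (hL.unique_rep m).exists.choose_spec.1

@[simp]
theorem monProd_rep (hL : IsMonMarkovLang φ L) (m : M) : monProd φ (hL.rep m) = m :=
  (hL.unique_rep m).exists.choose_spec.2

theorem rep_monProd (hL : IsMonMarkovLang φ L) {w : List A} (hw : w ∈ L) :
    hL.rep (monProd φ w) = w :=
  (hL.unique_rep _).unique ⟨hL.rep_mem _, hL.monProd_rep _⟩ ⟨hw, rfl⟩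

theorem rep_ne_nil (hL : IsMonMarkovLang φ L) {m : M} (hm : m ≠ 1) : hL.rep m ≠ [] := by
  intro h
  exact hm (by rw [← hL.monProd_rep m, h]; rfl)

theorem monProd_ne_one (hL : IsMonMarkovLang φ L) {w : List A} (hw : w ∈ L) (hne : w ≠ []) :
    monProd φ w ≠ 1 := by
  intro h
  exact hne (by rw [← hL.rep_monProd hw, h, ← hL.rep_monProd hL.nil_mem]; rfl)

end IsMonMarkovLang

theorem MonMarkov.of_mulEquiv {M M' : Type} [Monoid M] [Monoid M'] (e : M ≃* M')
    (h : MonMarkov M) : MonMarkov M' := by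
  obtain ⟨A, hA, φ, hφ, L, hL⟩ := h
  have he : ∀ w, monProd (e ∘ φ) w = e (monProd φ w) := monProd_comp e.toMonoidHom φ
  refine ⟨A, hA, e ∘ φ, ?_, L, hL.regular, hL.prefix_closed, fun m => ?_⟩
  · simpa [Surjective, he] using e.surjective.comp hφ
  · simpa [he, e.eq_symm_apply] using hL.unique_rep (e.symm m)

theorem Language.IsRegular.of_leftQuotient_mem {α : Type} {L : Language α}
    {S : Set (Language α)} (hS : S.Finite) (hL : L ∈ S)
    (hstep : ∀ X ∈ S, ∀ a, X.leftQuotient [a] ∈ S) : L.IsRegular := by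
  refine .of_finite_range_leftQuotient (hS.subset ?_)
  rintro _ ⟨w, rfl⟩
  induction w using List.reverseRecOn with
  | nil => exact hL
  | append_singleton w a ih => rw [Language.leftQuotient_append]; exact hstep _ ih a

section Alternating

variable {ι : Type} {A : ι → Type} (L : ∀ i, Language (A i))

/-- `o` is the factor of the block preceding `w`, if any. -/
inductive Alternating : Option ι → List (Σ i, A i) → Prop
  | nil {o : Option ι} : Alternating o []
  | cons {o : Option ι} {i : ι} {u : List (A i)} {w : List (Σ i, A i)} :
      some i ≠ o → u ∈ L i → u ≠ [] → Alternating (some i) w →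
      Alternating o (u.map (Sigma.mk i) ++ w)

/-- Together with `0` and `{w | Alternating L none w}` itself, these languages, for `Q` a left
quotient of `L i`, are all the left quotients of `{w | Alternating L none w}`. -/
def finishBlock (i : ι) (Q : Language (A i)) : Language (Σ i, A i) :=
  {x | ∃ u ∈ Q, ∃ w, Alternating L (some i) w ∧ x = u.map (Sigma.mk i) ++ w}

variable {L}

theorem alternating_cons_iff {o : Option ι} {j : ι} {a : A j} {y : List (Σ i, A i)} :
    Alternating L o (⟨j, a⟩ :: y) ↔
      some j ≠ o ∧ y ∈ finishBlock L j ((L j).leftQuotient [a]) := by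
  constructor
  · intro h
    generalize hx : (⟨j, a⟩ :: y : List (Σ i, A i)) = x at h
    cases h with
    | nil => cases hx
    | cons hio hu hne hw =>
      obtain ⟨b, u, rfl⟩ := List.exists_cons_of_ne_nil hne
      simp only [List.map_cons, List.cons_append, List.cons.injEq, Sigma.mk.injEq] at hx
      obtain ⟨⟨rfl, hab⟩, rfl⟩ := hx
      cases hab
      exact ⟨hio, u, hu, _, hw, rfl⟩
  · rintro ⟨hjo, u, hu, w, hw, rfl⟩
    exact Alternating.cons (u := a :: u) hjo hu (List.cons_ne_nil _ _) hw

theorem cons_mem_finishBlock_self {i : ι} {Q : Language (A i)} {a : A i}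
    {y : List (Σ i, A i)} :
    ⟨i, a⟩ :: y ∈ finishBlock L i Q ↔ y ∈ finishBlock L i (Q.leftQuotient [a]) := by
  constructor
  · rintro ⟨_ | ⟨b, u⟩, hu, w, hw, hx⟩
    · subst hx
      exact absurd rfl (alternating_cons_iff.1 hw).1
    · simp only [List.map_cons, List.cons_append, List.cons.injEq, Sigma.mk.injEq,
        heq_eq_eq, true_and] at hx
      obtain ⟨rfl, rfl⟩ := hx
      exact ⟨u, hu, w, hw, rfl⟩
  · rintro ⟨u, hu, w, hw, rfl⟩
    exact ⟨a :: u, hu, w, hw, rfl⟩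

theorem cons_mem_finishBlock_of_ne {i j : ι} (hji : j ≠ i) {Q : Language (A i)} {a : A j}
    {y : List (Σ i, A i)} :
    ⟨j, a⟩ :: y ∈ finishBlock L i Q ↔
      [] ∈ Q ∧ y ∈ finishBlock L j ((L j).leftQuotient [a]) := by
  constructor
  · rintro ⟨_ | ⟨b, u⟩, hu, w, hw, hx⟩
    · subst hx
      exact ⟨hu, (alternating_cons_iff.1 hw).2⟩
    · simp only [List.map_cons, List.cons_append, List.cons.injEq, Sigma.mk.injEq] at hx
      exact absurd hx.1.1 hji
  · rintro ⟨hQ, hy⟩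
    exact ⟨[], hQ, _, alternating_cons_iff.2 ⟨by simpa using hji, hy⟩, rfl⟩

theorem isRegular_alternating [Finite ι] (hreg : ∀ i, (L i).IsRegular) :
    Language.IsRegular {w | Alternating L none w} := by
  refine .of_leftQuotient_mem (S := insert 0 (insert {w | Alternating L none w}
    (⋃ i, Set.range fun x => finishBlock L i ((L i).leftQuotient x)))) ?_
    (Set.mem_insert_of_mem _ (Set.mem_insert _ _)) ?_
  · refine ((Set.finite_iUnion fun i => ?_).insert _).insert _
    rw [Set.range_comp' (finishBlock L i)]
    exact (hreg i).finite_range_leftQuotient.image _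
  · rintro X hX ⟨j, a⟩
    rcases hX with rfl | rfl | hX
    · exact Or.inl rfl
    · refine Or.inr (Or.inr (Set.mem_iUnion.2 ⟨j, [a], ?_⟩))
      ext y
      exact (alternating_cons_iff.trans (and_iff_right (Option.some_ne_none j))).symm
    obtain ⟨i, x, rfl⟩ := Set.mem_iUnion.1 hX
    by_cases hji : j = i
    · subst hji
      refine Or.inr (Or.inr (Set.mem_iUnion.2 ⟨j, x ++ [a], ?_⟩))
      ext y
      exact (Language.leftQuotient_append (L j) x [a] ▸ cons_mem_finishBlock_self).symm
    by_cases hx : x ∈ L i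
    · refine Or.inr (Or.inr (Set.mem_iUnion.2 ⟨j, [a], ?_⟩))
      ext y
      exact ((cons_mem_finishBlock_of_ne hji).trans (and_iff_right (by simpa using hx))).symm
    · refine Or.inl ?_
      ext y
      refine (cons_mem_finishBlock_of_ne hji).trans ?_
      simpa using fun h _ => hx h

theorem Alternating.of_append (hL : ∀ i (u v : List (A i)), u ++ v ∈ L i → u ∈ L i)
    {o : Option ι} {u v : List (Σ i, A i)} (h : Alternating L o (u ++ v)) :
    Alternating L o u := by
  generalize hx : u ++ v = x at h
  induction h generalizing u v with
  | nil => rw [(List.append_eq_nil_iff.1 hx).1]; exact .nil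
  | @cons o i b w hio hb hne hw ih =>
    rcases List.append_eq_append_iff.1 hx with ⟨t, hbt, -⟩ | ⟨t, rfl, hw⟩
    · obtain ⟨p, s, rfl, rfl, -⟩ := List.map_eq_append_iff.1 hbt
      by_cases hp : p = []
      · subst hp
        exact .nil
      · simpa using Alternating.cons hio (hL i p s hb) hp .nil
    · exact .cons hio hb hne (ih hw.symm)

end Alternating

section CoprodI

variable {ι : Type} {A M : ι → Type} [∀ i, Monoid (M i)] {φ : ∀ i, A i → M i}
  {L : ∀ i, Language (A i)}

variable (φ) in
def sigmaLetter (c : Σ i, A i) : CoprodI M :=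
  CoprodI.of (φ c.1 c.2)

theorem monProd_map_sigmaMk (i : ι) (u : List (A i)) :
    monProd (sigmaLetter φ) (u.map (Sigma.mk i)) = CoprodI.of (monProd (φ i) u) := by
  rw [← monProd_comp]
  simp [monProd, Function.comp_def, sigmaLetter]

variable (hL : ∀ i, IsMonMarkovLang (φ i) (L i))

noncomputable def spell (l : List (Σ i, M i)) : List (Σ i, A i) :=
  l.flatMap fun x => ((hL x.1).rep x.2).map (Sigma.mk x.1)

theorem monProd_spell (l : List (Σ i, M i)) :
    monProd (sigmaLetter φ) (spell hL l) = (l.map fun x => CoprodI.of x.2).prod := by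
  induction l with
  | nil => rfl
  | cons x l ih => simp [spell, monProd_map_sigmaMk, ← ih]

theorem alternating_spell {o : Option ι} {l : List (Σ i, M i)} (hne : ∀ x ∈ l, x.2 ≠ 1)
    (hchain : l.IsChain fun x y => x.1 ≠ y.1) (hhead : ∀ x ∈ l.head?, some x.1 ≠ o) :
    Alternating L o (spell hL l) := by
  induction l generalizing o with
  | nil => exact .nil
  | cons x l ih =>
    rw [List.isChain_cons] at hchain
    refine .cons (hhead x rfl) ((hL x.1).rep_mem _) ((hL x.1).rep_ne_nil (hne x (by simp))) ?_
    exact ih (fun y hy => hne y (by simp [hy])) hchain.2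
      (fun y hy => by simpa using (hchain.1 y hy).symm)

theorem Alternating.exists_spell {o : Option ι} {w : List (Σ i, A i)} (h : Alternating L o w) :
    ∃ l : List (Σ i, M i), (∀ x ∈ l, x.2 ≠ 1) ∧ (l.IsChain fun x y => x.1 ≠ y.1) ∧
      (∀ x ∈ l.head?, some x.1 ≠ o) ∧ spell hL l = w := by
  induction h with
  | nil => exact ⟨[], by simp, .nil, by simp, rfl⟩
  | @cons o i u w hio hu hne _ ih =>
    obtain ⟨l, hl1, hchain, hhead, rfl⟩ := ih
    refine ⟨⟨i, monProd (φ i) u⟩ :: l, ?_, ?_, by simpa using hio, ?_⟩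
    · simpa using ⟨(hL i).monProd_ne_one hu hne, hl1⟩
    · exact List.isChain_cons.2 ⟨fun y hy => by simpa using (hhead y hy).symm, hchain⟩
    · simp [spell, (hL i).rep_monProd hu]

theorem alternating_none_iff {w : List (Σ i, A i)} :
    Alternating L none w ↔ ∃ W : CoprodI.Word M, spell hL W.toList = w :=
  ⟨fun h => let ⟨l, hne, hchain, _, hw⟩ := h.exists_spell hL; ⟨⟨l, hne, hchain⟩, hw⟩,
    fun ⟨W, hW⟩ => hW ▸ alternating_spell hL W.ne_one W.chain_ne (by simp)⟩

end CoprodI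

theorem isMonMarkovLang_alternating {ι : Type} [Finite ι] {A M : ι → Type} [∀ i, Monoid (M i)]
    {φ : ∀ i, A i → M i} {L : ∀ i, Language (A i)} (hL : ∀ i, IsMonMarkovLang (φ i) (L i)) :
    IsMonMarkovLang (sigmaLetter φ) {w | Alternating L none w} where
  regular := isRegular_alternating fun i => (hL i).regular
  prefix_closed _ _ h := Alternating.of_append (fun i => (hL i).prefix_closed) h
  unique_rep m := by
    classical
    have hbij :
        Bijective fun W : CoprodI.Word M => monProd (sigmaLetter φ) (spell hL W.toList) := by
      simp only [monProd_spell]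
      exact CoprodI.Word.equiv.symm.bijective
    obtain ⟨W, rfl⟩ := hbij.2 m
    refine ⟨spell hL W.toList, ⟨(alternating_none_iff hL).2 ⟨W, rfl⟩, rfl⟩, ?_⟩
    rintro w ⟨hw, hwW⟩
    obtain ⟨W', rfl⟩ := (alternating_none_iff hL).1 hw
    rw [hbij.1 hwW]

theorem MonMarkov.coprodI {ι : Type} [Fintype ι] {M : ι → Type} [∀ i, Monoid (M i)]
    (h : ∀ i, MonMarkov (M i)) : MonMarkov (CoprodI M) := by
  choose A hA φ _ L hL using h
  have hK := isMonMarkovLang_alternating hL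
  exact ⟨Σ i, A i, inferInstance, sigmaLetter φ, hK.surjective, _, hK⟩

def boolFamily (M N : Type) (b : Bool) : Type :=
  cond b M N

instance (M N : Type) [Monoid M] [Monoid N] : ∀ b, Monoid (boolFamily M N b)
  | true => inferInstanceAs (Monoid M)
  | false => inferInstanceAs (Monoid N)

def boolFamily.toCoprod (M N : Type) [Monoid M] [Monoid N] :
    ∀ b, boolFamily M N b →* Coprod M N
  | true => Coprod.inl
  | false => Coprod.inr

def boolFamily.coprodIMulEquiv (M N : Type) [Monoid M] [Monoid N] :
    CoprodI (boolFamily M N) ≃* Coprod M N :=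
  MonoidHom.toMulEquiv (CoprodI.lift (toCoprod M N))
    (Coprod.lift (CoprodI.of (M := boolFamily M N) (i := true) : M →* _)
      (CoprodI.of (M := boolFamily M N) (i := false) : N →* _))
    (by
      ext b x
      cases b <;> simp only [MonoidHom.comp_apply, MonoidHom.id_apply, CoprodI.lift_of]
      exacts [Coprod.lift_apply_inr _ _ x, Coprod.lift_apply_inl _ _ x])
    (by
      ext x
      exacts [CoprodI.lift_of (toCoprod M N) (i := true) x,
        CoprodI.lift_of (toCoprod M N) (i := false) x])

/-- The free product (monoid coproduct) of two Markov monoids is a Markov monoid. -/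
theorem stmt14 {M N : Type} [Monoid M] [Monoid N]
    (hM : MonMarkov M) (hN : MonMarkov N) : MonMarkov (Monoid.Coprod M N) :=
  (MonMarkov.coprodI (M := boolFamily M N) (Bool.rec hN hM)).of_mulEquiv
    (boolFamily.coprodIMulEquiv M N)
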